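/- arXiv:2009.04224 — 4 statements merged into one kernel-verified Lean document; each statement's English description precedes it below -/
import Mathlib

section
/- In the sensor MDP, the optimal state-value function v*(b, Δ) is non-decreasing in the AoI Δ: for fixed battery level b, Δ ≤ Δ̄ implies v*(b, Δ) ≤ v*(b, Δ̄). This follows by induction on value iteration: if v⁽ⁿ⁾ is non-decreasing in Δ, so is v⁽ⁿ⁺¹⁾ = T v⁽ⁿ⁾, and monotonicity is preserved in the limit. -/
/-! Let `M ≥ 0` bound the violations `v*(b, Δ) - v*(b, Δ')`, `Δ ≤ Δ'`, of monotonicity. Raising the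
AoI raises the immediate cost and moves the next state to a larger AoI (or resets both sides to
`Δ = 1` on a successful update), so through the Bellman equation every violation is at most `γ M`.
Taking for `M` the largest violation over the finite state space gives `M ≤ γ M`, hence `M ≤ 0`. -/

/-- Optimal action-value function form for the sensor MDP: expected immediate
cost (weight `β` times the next-slot AoI) plus discounted next-state value,
for state `(b, Δ)` and action `a ∈ {0,1}`. -/
noncomputable def Qsens (B Δmax : ℕ) (lam xi β γ : ℝ) (v : ℕ × ℕ → ℝ)
    (b Δ : ℕ) (a : ℕ) : ℝ :=
  let m : ℕ := min (Δ + 1) Δmax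
  if a = 0 then
    if b < B then
      lam * (β * (m : ℝ) + γ * v (b + 1, m))
        + (1 - lam) * (β * (m : ℝ) + γ * v (b, m))
    else
      β * (m : ℝ) + γ * v (B, m)
  else
    if b = 0 then
      lam * (β * (m : ℝ) + γ * v (1, m))
        + (1 - lam) * (β * (m : ℝ) + γ * v (0, m))
    else
      lam * xi * (β * 1 + γ * v (b, 1))
        + lam * (1 - xi) * (β * (m : ℝ) + γ * v (b, m))
        + (1 - lam) * xi * (β * 1 + γ * v (b - 1, 1))
        + (1 - lam) * (1 - xi) * (β * (m : ℝ) + γ * v (b - 1, m))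

theorem Finset.forall_nonpos_of_le_mul {ι : Type*} (s : Finset ι) (d : ι → ℝ) {γ : ℝ}
    (hγ : γ < 1) (h : ∀ M, 0 ≤ M → (∀ i ∈ s, d i ≤ M) → ∀ i ∈ s, d i ≤ γ * M) :
    ∀ i ∈ s, d i ≤ 0 := by
  intro i hi
  have hs : s.Nonempty := ⟨i, hi⟩
  suffices s.sup' hs d ≤ 0 from (s.le_sup' d hi).trans this
  by_contra! hpos
  obtain ⟨p, hp, hpM⟩ := s.exists_mem_eq_sup' hs d
  have := h _ hpos.le (fun j hj => s.le_sup' d hj) p hp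
  nlinarith

theorem convex_comb_le_add {t x x' y y' c : ℝ} (ht₀ : 0 ≤ t) (ht₁ : t ≤ 1)
    (h : x ≤ y + c) (h' : x' ≤ y' + c) :
    t * x + (1 - t) * x' ≤ t * y + (1 - t) * y' + c := by
  nlinarith

namespace SensorMDP

def AoIGapLE (B Δmax : ℕ) (v : ℕ × ℕ → ℝ) (M : ℝ) : Prop :=
  ∀ b Δ Δ', b ≤ B → 1 ≤ Δ → Δ ≤ Δ' → Δ' ≤ Δmax → v (b, Δ) ≤ v (b, Δ') + M

variable {B Δmax : ℕ} {lam xi β γ : ℝ} {v : ℕ × ℕ → ℝ} {M : ℝ}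

theorem Qsens_le_add (hB : 1 ≤ B) (hΔmax : 1 ≤ Δmax) (hlam₀ : 0 ≤ lam) (hlam₁ : lam ≤ 1)
    (hxi₀ : 0 ≤ xi) (hxi₁ : xi ≤ 1) (hβ : 0 ≤ β) (hγ : 0 ≤ γ)
    (hv : AoIGapLE B Δmax v M) (hM : 0 ≤ M) {b Δ Δ' : ℕ} (hb : b ≤ B) (hΔ : Δ ≤ Δ') (a : ℕ) :
    Qsens B Δmax lam xi β γ v b Δ a ≤ Qsens B Δmax lam xi β γ v b Δ' a + γ * M := by
  unfold Qsens
  set m := min (Δ + 1) Δmax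
  set m' := min (Δ' + 1) Δmax
  have stage : ∀ c ≤ B, β * (m : ℝ) + γ * v (c, m) ≤ β * (m' : ℝ) + γ * v (c, m') + γ * M := by
    intro c hc
    have hcost : β * (m : ℝ) ≤ β * (m' : ℝ) := by gcongr; omega
    have hnext := mul_le_mul_of_nonneg_left (hv c m m' hc (by omega) (by omega) (by omega)) hγ
    linarith
  rcases eq_or_ne a 0 with rfl | ha
  · simp only [if_true]
    split_ifs with hbB
    · exact convex_comb_le_add hlam₀ hlam₁ (stage _ hbB) (stage _ hb)
    · exact stage _ le_rfl
  · simp only [if_neg ha]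
    split_ifs with hb₀
    · exact convex_comb_le_add hlam₀ hlam₁ (stage _ hB) (stage _ B.zero_le)
    · have hkeep := mul_le_mul_of_nonneg_left (stage b hb)
        (mul_nonneg hlam₀ (sub_nonneg.2 hxi₁))
      have hdrain := mul_le_mul_of_nonneg_left (stage (b - 1) (by omega))
        (mul_nonneg (sub_nonneg.2 hlam₁) (sub_nonneg.2 hxi₁))
      nlinarith [mul_nonneg (mul_nonneg hxi₀ hγ) hM]

theorem aoiGapLE_mul_of_bellman_eq (hB : 1 ≤ B) (hlam₀ : 0 ≤ lam) (hlam₁ : lam ≤ 1)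
    (hxi₀ : 0 ≤ xi) (hxi₁ : xi ≤ 1) (hβ : 0 ≤ β) (hγ : 0 ≤ γ)
    (hfix : ∀ b Δ, b ≤ B → 1 ≤ Δ → Δ ≤ Δmax →
      v (b, Δ) = min (Qsens B Δmax lam xi β γ v b Δ 0) (Qsens B Δmax lam xi β γ v b Δ 1))
    (hv : AoIGapLE B Δmax v M) (hM : 0 ≤ M) :
    AoIGapLE B Δmax v (γ * M) := by
  intro b Δ Δ' hb hΔ hΔΔ' hΔ'
  have hQ := Qsens_le_add (lam := lam) (xi := xi) (β := β) hB (by omega) hlam₀ hlam₁ hxi₀ hxi₁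
    hβ hγ hv hM hb hΔΔ'
  rw [hfix b Δ hb hΔ (by omega), hfix b Δ' hb (by omega) hΔ', ← min_add_add_right]
  exact min_le_min (hQ 0) (hQ 1)

theorem aoiGapLE_zero_of_mul_closed (hγ : γ < 1)
    (h : ∀ M, 0 ≤ M → AoIGapLE B Δmax v M → AoIGapLE B Δmax v (γ * M)) :
    AoIGapLE B Δmax v 0 := by
  let states := (Finset.range (B + 1) ×ˢ Finset.Icc 1 Δmax ×ˢ Finset.Icc 1 Δmax).filter
    (fun p : ℕ × ℕ × ℕ => p.2.1 ≤ p.2.2)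
  have mem_states : ∀ {b Δ Δ'}, (b, Δ, Δ') ∈ states ↔ b ≤ B ∧ 1 ≤ Δ ∧ Δ ≤ Δ' ∧ Δ' ≤ Δmax := by
    intro b Δ Δ'
    simp only [states, Finset.mem_filter, Finset.mem_product, Finset.mem_range, Finset.mem_Icc]
    omega
  have gapLE_iff : ∀ M, AoIGapLE B Δmax v M ↔
      ∀ p ∈ states, v (p.1, p.2.1) - v (p.1, p.2.2) ≤ M := by
    intro M
    constructor
    · rintro hv ⟨b, Δ, Δ'⟩ hp
      obtain ⟨hb, hΔ, hΔΔ', hΔ'⟩ := mem_states.1 hp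
      exact sub_le_iff_le_add'.2 (hv b Δ Δ' hb hΔ hΔΔ' hΔ')
    · intro hv b Δ Δ' hb hΔ hΔΔ' hΔ'
      linarith [hv (b, Δ, Δ') (mem_states.2 ⟨hb, hΔ, hΔΔ', hΔ'⟩)]
  rw [gapLE_iff]
  exact states.forall_nonpos_of_le_mul _ hγ fun M hM hv =>
    (gapLE_iff _).1 (h M hM ((gapLE_iff M).2 hv))

end SensorMDP

theorem vstar_monotone_in_AoI_general (B Δmax : ℕ) (hB : 1 ≤ B)
    (lam xi β γ : ℝ)
    (hlam : 0 ≤ lam ∧ lam ≤ 1) (hxi : 0 ≤ xi ∧ xi ≤ 1)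
    (hβ : 0 ≤ β) (hγ : 0 ≤ γ ∧ γ < 1)
    (vstar : ℕ × ℕ → ℝ)
    (hfix : ∀ b Δ, b ≤ B → 1 ≤ Δ → Δ ≤ Δmax →
      vstar (b, Δ) = min (Qsens B Δmax lam xi β γ vstar b Δ 0)
        (Qsens B Δmax lam xi β γ vstar b Δ 1)) :
    ∀ b Δ Δ', b ≤ B → 1 ≤ Δ → Δ ≤ Δ' → Δ' ≤ Δmax →
      vstar (b, Δ) ≤ vstar (b, Δ') := by
  have hmono : SensorMDP.AoIGapLE B Δmax vstar 0 :=
    SensorMDP.aoiGapLE_zero_of_mul_closed hγ.2 fun _ hM hv =>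
      SensorMDP.aoiGapLE_mul_of_bellman_eq hB hlam.1 hlam.2 hxi.1 hxi.2 hβ hγ.1 hfix hv hM
  intro b Δ Δ' hb hΔ hΔΔ' hΔ'
  simpa using hmono b Δ Δ' hb hΔ hΔΔ' hΔ'

/-- The optimal state-value function of the sensor MDP is non-decreasing in
the AoI. -/
theorem vstar_monotone_in_AoI (B Δmax : ℕ) (hB : 1 ≤ B) (hΔmax : 1 ≤ Δmax)
    (lam xi β γ : ℝ)
    (hlam : 0 ≤ lam ∧ lam ≤ 1) (hxi : 0 ≤ xi ∧ xi ≤ 1)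
    (hβ : 0 ≤ β) (hγ : 0 ≤ γ ∧ γ < 1)
    (vstar : ℕ × ℕ → ℝ)
    (hfix : ∀ b Δ, b ≤ B → 1 ≤ Δ → Δ ≤ Δmax →
      vstar (b, Δ) = min (Qsens B Δmax lam xi β γ vstar b Δ 0)
        (Qsens B Δmax lam xi β γ vstar b Δ 1)) :
    ∀ b Δ Δ', b ≤ B → 1 ≤ Δ → Δ ≤ Δ' → Δ' ≤ Δmax →
      vstar (b, Δ) ≤ vstar (b, Δ') :=
  vstar_monotone_in_AoI_general B Δmax hB lam xi β γ hlam hxi hβ hγ vstar hfix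
end

section
/- In the sensor MDP, the optimal state-value function v*(b, Δ) is non-increasing in the battery level b: for fixed AoI Δ, b ≤ b̄ implies v*(b̄, Δ) ≤ v*(b, Δ). -/
theorem nonpos_of_bound_contracts {α : Type*} {s : Set α} (hs : s.Finite) {f : α → ℝ}
    {γ : ℝ} (hγ : γ < 1)
    (h : ∀ c, 0 ≤ c → (∀ p ∈ s, f p ≤ c) → ∀ p ∈ s, f p ≤ γ * c) :
    ∀ p ∈ s, f p ≤ 0 := by
  intro p hp
  by_contra! hpos
  obtain ⟨q, hq, hmax⟩ := s.exists_max_image f hs ⟨p, hp⟩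
  have hM : 0 < f q := hpos.trans_le (hmax p hp)
  have hcontr : f q ≤ γ * f q := h (f q) hM.le hmax q hq
  linarith [mul_lt_mul_of_pos_right hγ hM]

section Bellman

variable {B Δmax : ℕ} {lam xi β γ c : ℝ} {v : ℕ × ℕ → ℝ}

theorem Qsens_zero_succ_sub_le (hlam : 0 ≤ lam ∧ lam ≤ 1) (hγ : 0 ≤ γ) (hc0 : 0 ≤ c)
    (hc : ∀ b Δ, b < B → 1 ≤ Δ → Δ ≤ Δmax → v (b + 1, Δ) - v (b, Δ) ≤ c)
    {b Δ : ℕ} (hb : b < B) (hΔmax : 1 ≤ Δmax) :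
    Qsens B Δmax lam xi β γ v (b + 1) Δ 0 - Qsens B Δmax lam xi β γ v b Δ 0 ≤ γ * c := by
  set m := min (Δ + 1) Δmax
  have hm1 : 1 ≤ m := le_min (by omega) hΔmax
  have hmΔ : m ≤ Δmax := min_le_right _ _
  obtain ⟨hlam0, hlam1⟩ := hlam
  have hlam' : 0 ≤ 1 - lam := sub_nonneg.2 hlam1
  rcases (show b + 1 ≤ B from hb).lt_or_eq with hb1 | hbB
  · have h1 := hc _ _ hb1 hm1 hmΔ
    have h2 := hc _ _ hb hm1 hmΔ
    calc Qsens B Δmax lam xi β γ v (b + 1) Δ 0 - Qsens B Δmax lam xi β γ v b Δ 0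
          = γ * (lam * (v (b + 1 + 1, m) - v (b + 1, m))
              + (1 - lam) * (v (b + 1, m) - v (b, m))) := by
            simp only [Qsens, hb, hb1, if_true]; ring
      _ ≤ γ * (lam * c + (1 - lam) * c) := by gcongr
      _ = γ * c := by ring
  · have h2 := hc _ _ hb hm1 hmΔ
    -- a full battery cannot be charged further, so the charging branch contributes increment 0
    subst hbB
    calc Qsens (b + 1) Δmax lam xi β γ v (b + 1) Δ 0 - Qsens (b + 1) Δmax lam xi β γ v b Δ 0
          = γ * (lam * 0 + (1 - lam) * (v (b + 1, m) - v (b, m))) := by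
            simp only [Qsens, hb, lt_irrefl, if_true, if_false]; ring
      _ ≤ γ * (lam * c + (1 - lam) * c) := by gcongr
      _ = γ * c := by ring

theorem Qsens_one_succ_succ_sub_le (hlam : 0 ≤ lam ∧ lam ≤ 1) (hxi : 0 ≤ xi ∧ xi ≤ 1)
    (hγ : 0 ≤ γ)
    (hc : ∀ b Δ, b < B → 1 ≤ Δ → Δ ≤ Δmax → v (b + 1, Δ) - v (b, Δ) ≤ c)
    {b Δ : ℕ} (hb : b + 1 < B) (hΔmax : 1 ≤ Δmax) :
    Qsens B Δmax lam xi β γ v (b + 1 + 1) Δ 1 - Qsens B Δmax lam xi β γ v (b + 1) Δ 1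
      ≤ γ * c := by
  set m := min (Δ + 1) Δmax
  have hm1 : 1 ≤ m := le_min (by omega) hΔmax
  have hmΔ : m ≤ Δmax := min_le_right _ _
  obtain ⟨hlam0, hlam1⟩ := hlam
  obtain ⟨hxi0, hxi1⟩ := hxi
  have hlam' : 0 ≤ 1 - lam := sub_nonneg.2 hlam1
  have hxi' : 0 ≤ 1 - xi := sub_nonneg.2 hxi1
  have h1 := hc _ _ hb le_rfl hΔmax
  have h2 := hc _ _ hb hm1 hmΔ
  have h3 := hc b _ (by omega) le_rfl hΔmax
  have h4 := hc b _ (by omega) hm1 hmΔ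
  calc Qsens B Δmax lam xi β γ v (b + 1 + 1) Δ 1 - Qsens B Δmax lam xi β γ v (b + 1) Δ 1
        = γ * (lam * xi * (v (b + 1 + 1, 1) - v (b + 1, 1))
            + lam * (1 - xi) * (v (b + 1 + 1, m) - v (b + 1, m))
            + (1 - lam) * xi * (v (b + 1, 1) - v (b, 1))
            + (1 - lam) * (1 - xi) * (v (b + 1, m) - v (b, m))) := by
          simp only [Qsens, one_ne_zero, Nat.add_one_ne_zero, Nat.add_sub_cancel, if_false]
          ring
    _ ≤ γ * (lam * xi * c + lam * (1 - xi) * c + (1 - lam) * xi * c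
            + (1 - lam) * (1 - xi) * c) := by gcongr
    _ = γ * c := by ring

theorem Qsens_one_zero (hB : 0 < B) (Δ : ℕ) :
    Qsens B Δmax lam xi β γ v 0 Δ 1 = Qsens B Δmax lam xi β γ v 0 Δ 0 := by
  simp [Qsens, hB]

theorem battery_step_le_mul_of_isFixedPt (hlam : 0 ≤ lam ∧ lam ≤ 1)
    (hxi : 0 ≤ xi ∧ xi ≤ 1) (hγ : 0 ≤ γ)
    (hfix : ∀ b Δ, b ≤ B → 1 ≤ Δ → Δ ≤ Δmax →
      v (b, Δ) = min (Qsens B Δmax lam xi β γ v b Δ 0) (Qsens B Δmax lam xi β γ v b Δ 1))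
    (hc0 : 0 ≤ c) (hc : ∀ b Δ, b < B → 1 ≤ Δ → Δ ≤ Δmax → v (b + 1, Δ) - v (b, Δ) ≤ c)
    {b Δ : ℕ} (hb : b < B) (hΔ : 1 ≤ Δ) (hΔmax : Δ ≤ Δmax) :
    v (b + 1, Δ) - v (b, Δ) ≤ γ * c := by
  have hΔmax₁ : 1 ≤ Δmax := hΔ.trans hΔmax
  have h0 := Qsens_zero_succ_sub_le (xi := xi) (β := β) hlam hγ hc0 hc hb hΔmax₁ (Δ := Δ)
  rw [hfix _ _ hb hΔ hΔmax, hfix _ _ hb.le hΔ hΔmax, sub_le_iff_le_add]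
  rcases b with _ | b
  · rw [Qsens_one_zero hb, min_self]
    exact (min_le_left _ _).trans (sub_le_iff_le_add.1 h0)
  · have h1 := Qsens_one_succ_succ_sub_le (β := β) hlam hxi hγ hc hb hΔmax₁ (Δ := Δ)
    exact (min_le_min (sub_le_iff_le_add.1 h0) (sub_le_iff_le_add.1 h1)).trans_eq
      (min_add_add_left _ _ _)

end Bellman

theorem vstar_antitone_in_battery_general (B Δmax : ℕ)
    (lam xi β γ : ℝ)
    (hlam : 0 ≤ lam ∧ lam ≤ 1) (hxi : 0 ≤ xi ∧ xi ≤ 1)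
    (hγ : 0 ≤ γ ∧ γ < 1)
    (vstar : ℕ × ℕ → ℝ)
    (hfix : ∀ b Δ, b ≤ B → 1 ≤ Δ → Δ ≤ Δmax →
      vstar (b, Δ) = min (Qsens B Δmax lam xi β γ vstar b Δ 0)
        (Qsens B Δmax lam xi β γ vstar b Δ 1)) :
    ∀ b b' Δ, b ≤ b' → b' ≤ B → 1 ≤ Δ → Δ ≤ Δmax →
      vstar (b', Δ) ≤ vstar (b, Δ) := by
  intro b b' Δ hbb' hb'B hΔ hΔmax
  have hstep : ∀ p ∈ Set.Iio B ×ˢ Set.Icc 1 Δmax, vstar (p.1 + 1, p.2) - vstar p ≤ 0 :=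
    nonpos_of_bound_contracts ((Set.finite_Iio B).prod (Set.finite_Icc 1 Δmax)) hγ.2
      fun c hc0 hc p hp ↦ battery_step_le_mul_of_isFixedPt hlam hxi hγ.1 hfix hc0
        (fun b Δ hb hΔ hΔmax ↦ hc (b, Δ) ⟨hb, hΔ, hΔmax⟩) hp.1 hp.2.1 hp.2.2
  have hanti : AntitoneOn (fun b ↦ vstar (b, Δ)) (Set.Iic B) :=
    antitoneOn_of_add_one_le Set.ordConnected_Iic fun b _ _ hb ↦
      sub_nonpos.1 (hstep (b, Δ) ⟨hb, hΔ, hΔmax⟩)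
  exact hanti (hbb'.trans hb'B) hb'B hbb'

/-- The optimal state-value function of the sensor MDP is non-increasing in
the battery level. -/
theorem vstar_antitone_in_battery (B Δmax : ℕ) (hB : 1 ≤ B) (hΔmax : 1 ≤ Δmax)
    (lam xi β γ : ℝ)
    (hlam : 0 ≤ lam ∧ lam ≤ 1) (hxi : 0 ≤ xi ∧ xi ≤ 1)
    (hβ : 0 ≤ β) (hγ : 0 ≤ γ ∧ γ < 1)
    (vstar : ℕ × ℕ → ℝ)
    (hfix : ∀ b Δ, b ≤ B → 1 ≤ Δ → Δ ≤ Δmax →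
      vstar (b, Δ) = min (Qsens B Δmax lam xi β γ vstar b Δ 0)
        (Qsens B Δmax lam xi β γ vstar b Δ 1)) :
    ∀ b b' Δ, b ≤ b' → b' ≤ B → 1 ≤ Δ → Δ ≤ Δmax →
      vstar (b', Δ) ≤ vstar (b, Δ) :=
  vstar_antitone_in_battery_general B Δmax lam xi β γ hlam hxi hγ vstar hfix
end

section
/- In the sensor MDP with error-free channel ξ = 1, the advantage function δq*(b, Δ) = q*((b,Δ),1) − q*((b,Δ),0) is non-increasing in the AoI Δ: for fixed b, Δ ≤ Δ̄ implies δq*(b, Δ̄) ≤ δq*(b, Δ). -/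
theorem Set.Finite.forall_nonpos_of_contraction {ι : Type*} {s : Set ι} (hs : s.Finite)
    {f : ι → ℝ} {γ : ℝ} (hγ : γ < 1)
    (h : ∀ D, 0 ≤ D → (∀ j ∈ s, f j ≤ D) → ∀ i ∈ s, f i ≤ γ * D) :
    ∀ i ∈ s, f i ≤ 0 := by
  by_contra! ⟨i, hi, hfi⟩
  obtain ⟨k, hk, hmax⟩ := Set.exists_max_image s f hs ⟨i, hi⟩
  have hfk : 0 < f k := hfi.trans_le (hmax i hi)
  have := h (f k) hfk.le hmax k hk
  nlinarith

namespace Qsens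

variable {B Δmax : ℕ} {lam β γ : ℝ} {v : ℕ × ℕ → ℝ}

theorem one_eq_of_ne_zero {b : ℕ} (hb : b ≠ 0) (Δ Δ' : ℕ) :
    Qsens B Δmax lam 1 β γ v b Δ 1 = Qsens B Δmax lam 1 β γ v b Δ' 1 := by
  simp [Qsens, hb]

theorem one_eq_zero_of_empty (hB : 1 ≤ B) (Δ : ℕ) :
    Qsens B Δmax lam 1 β γ v 0 Δ 1 = Qsens B Δmax lam 1 β γ v 0 Δ 0 := by
  simp [Qsens, Nat.pos_of_ne_zero (Nat.one_le_iff_ne_zero.mp hB)]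

theorem zero_sub_le (hlam : 0 ≤ lam ∧ lam ≤ 1) (hβ : 0 ≤ β) (hγ : 0 ≤ γ)
    {b Δ Δ' : ℕ} (hb : b ≤ B) (hΔ : Δ ≤ Δ') {D : ℝ}
    (hD : ∀ b' ≤ B, v (b', min (Δ + 1) Δmax) - v (b', min (Δ' + 1) Δmax) ≤ D) :
    Qsens B Δmax lam 1 β γ v b Δ 0 - Qsens B Δmax lam 1 β γ v b Δ' 0 ≤ γ * D := by
  have hm : β * (min (Δ + 1) Δmax : ℕ) ≤ β * (min (Δ' + 1) Δmax : ℕ) :=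
    mul_le_mul_of_nonneg_left (by gcongr) hβ
  rcases hb.lt_or_eq with hlt | rfl
  · have hsucc := mul_le_mul_of_nonneg_left (hD (b + 1) hlt) hγ
    have hself := mul_le_mul_of_nonneg_left (hD b hlt.le) hγ
    simp only [Qsens, hlt, if_true]
    nlinarith
  · have hself := mul_le_mul_of_nonneg_left (hD b le_rfl) hγ
    simp only [Qsens, lt_irrefl, if_true, if_false]
    nlinarith

theorem min_sub_le (hB : 1 ≤ B) (hlam : 0 ≤ lam ∧ lam ≤ 1) (hβ : 0 ≤ β) (hγ : 0 ≤ γ)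
    {b Δ Δ' : ℕ} (hb : b ≤ B) (hΔ : Δ ≤ Δ') {D : ℝ} (hD0 : 0 ≤ D)
    (hD : ∀ b' ≤ B, v (b', min (Δ + 1) Δmax) - v (b', min (Δ' + 1) Δmax) ≤ D) :
    min (Qsens B Δmax lam 1 β γ v b Δ 0) (Qsens B Δmax lam 1 β γ v b Δ 1)
      - min (Qsens B Δmax lam 1 β γ v b Δ' 0) (Qsens B Δmax lam 1 β γ v b Δ' 1) ≤ γ * D := by
  have hidle := zero_sub_le hlam hβ hγ hb hΔ hD
  have htransmit : Qsens B Δmax lam 1 β γ v b Δ 1 - Qsens B Δmax lam 1 β γ v b Δ' 1 ≤ γ * D := by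
    rcases eq_or_ne b 0 with rfl | hb0
    · rwa [one_eq_zero_of_empty hB, one_eq_zero_of_empty hB]
    · rw [one_eq_of_ne_zero hb0 Δ Δ', sub_self]
      exact mul_nonneg hγ hD0
  rcases min_cases (Qsens B Δmax lam 1 β γ v b Δ' 0) (Qsens B Δmax lam 1 β γ v b Δ' 1)
    with ⟨h, -⟩ | ⟨h, -⟩ <;> rw [h]
  · linarith [min_le_left (Qsens B Δmax lam 1 β γ v b Δ 0) (Qsens B Δmax lam 1 β γ v b Δ 1)]
  · linarith [min_le_right (Qsens B Δmax lam 1 β γ v b Δ 0) (Qsens B Δmax lam 1 β γ v b Δ 1)]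

theorem monotone_AoI_of_fixedPoint (hB : 1 ≤ B) (hlam : 0 ≤ lam ∧ lam ≤ 1) (hβ : 0 ≤ β)
    (hγ : 0 ≤ γ ∧ γ < 1)
    (hfix : ∀ b Δ, b ≤ B → 1 ≤ Δ → Δ ≤ Δmax →
      v (b, Δ) = min (Qsens B Δmax lam 1 β γ v b Δ 0) (Qsens B Δmax lam 1 β γ v b Δ 1))
    {b Δ Δ' : ℕ} (hb : b ≤ B) (hΔ1 : 1 ≤ Δ) (hΔ : Δ ≤ Δ') (hΔ' : Δ' ≤ Δmax) :
    v (b, Δ) ≤ v (b, Δ') := by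
  let S : Set (ℕ × ℕ × ℕ) := {t | t.1 ≤ B ∧ 1 ≤ t.2.1 ∧ t.2.1 ≤ t.2.2 ∧ t.2.2 ≤ Δmax}
  have hS : S.Finite := ((Set.finite_Iic B).prod ((Set.finite_Iic Δmax).prod
    (Set.finite_Iic Δmax))).subset fun t ht => ⟨ht.1, ht.2.2.1.trans ht.2.2.2, ht.2.2.2⟩
  have hdefect := hS.forall_nonpos_of_contraction (f := fun t => v (t.1, t.2.1) - v (t.1, t.2.2))
    hγ.2 ?_ (b, Δ, Δ') ⟨hb, hΔ1, hΔ, hΔ'⟩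
  · exact sub_nonpos.mp hdefect
  rintro D hD0 hD ⟨c, m, m'⟩ ⟨hc, hm1, hm, hm'⟩
  dsimp only at hm1 hm hm' ⊢
  rw [hfix c m hc hm1 (hm.trans hm'), hfix c m' hc (hm1.trans hm) hm']
  exact min_sub_le hB hlam hβ hγ.1 hc hm hD0 fun c' hc' =>
    hD (c', _, _) (by simp only [S, Set.mem_ofPred_eq]; omega)

end Qsens

theorem advantage_antitone_in_AoI_general (B Δmax : ℕ) (hB : 1 ≤ B)
    (lam β γ : ℝ)
    (hlam : 0 ≤ lam ∧ lam ≤ 1)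
    (hβ : 0 ≤ β) (hγ : 0 ≤ γ ∧ γ < 1)
    (vstar : ℕ × ℕ → ℝ)
    (hfix : ∀ b Δ, b ≤ B → 1 ≤ Δ → Δ ≤ Δmax →
      vstar (b, Δ) = min (Qsens B Δmax lam 1 β γ vstar b Δ 0)
        (Qsens B Δmax lam 1 β γ vstar b Δ 1)) :
    ∀ b Δ Δ', b ≤ B → 1 ≤ Δ → Δ ≤ Δ' → Δ' ≤ Δmax →
      Qsens B Δmax lam 1 β γ vstar b Δ' 1 - Qsens B Δmax lam 1 β γ vstar b Δ' 0
        ≤ Qsens B Δmax lam 1 β γ vstar b Δ 1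
          - Qsens B Δmax lam 1 β γ vstar b Δ 0 := by
  intro b Δ Δ' hb hΔ1 hΔ hΔ'
  rcases eq_or_ne b 0 with rfl | hb0
  · simp only [Qsens.one_eq_zero_of_empty hB, sub_self, le_refl]
  have hidle : Qsens B Δmax lam 1 β γ vstar b Δ 0 - Qsens B Δmax lam 1 β γ vstar b Δ' 0 ≤ γ * 0 :=
    Qsens.zero_sub_le hlam hβ hγ.1 hb hΔ fun b' hb' => sub_nonpos.mpr <|
      Qsens.monotone_AoI_of_fixedPoint hB hlam hβ hγ hfix hb' (by omega) (by omega) (by omega)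
  rw [Qsens.one_eq_of_ne_zero hb0 Δ' Δ]
  linarith

/-- With an error-free channel (ξ = 1), the advantage
δq*(b, Δ) = q*((b,Δ),1) − q*((b,Δ),0) is non-increasing in the AoI. -/
theorem advantage_antitone_in_AoI (B Δmax : ℕ) (hB : 1 ≤ B) (hΔmax : 1 ≤ Δmax)
    (lam β γ : ℝ)
    (hlam : 0 ≤ lam ∧ lam ≤ 1)
    (hβ : 0 ≤ β) (hγ : 0 ≤ γ ∧ γ < 1)
    (vstar : ℕ × ℕ → ℝ)
    (hfix : ∀ b Δ, b ≤ B → 1 ≤ Δ → Δ ≤ Δmax →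
      vstar (b, Δ) = min (Qsens B Δmax lam 1 β γ vstar b Δ 0)
        (Qsens B Δmax lam 1 β γ vstar b Δ 1)) :
    ∀ b Δ Δ', b ≤ B → 1 ≤ Δ → Δ ≤ Δ' → Δ' ≤ Δmax →
      Qsens B Δmax lam 1 β γ vstar b Δ' 1 - Qsens B Δmax lam 1 β γ vstar b Δ' 0
        ≤ Qsens B Δmax lam 1 β γ vstar b Δ 1
          - Qsens B Δmax lam 1 β γ vstar b Δ 0 :=
  advantage_antitone_in_AoI_general B Δmax hB lam β γ hlam hβ hγ vstar hfix
end

section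
/- In the sensor MDP with error-free channel ξ = 1, any optimal deterministic policy is threshold-based in the AoI: if the optimal action at state (b, Δ) is to command (i.e., q*((b,Δ),1) ≤ q*((b,Δ),0)), then for any Δ̄ ≥ Δ the optimal action at (b, Δ̄) is also to command. -/
/-! With `ξ = 1`, commanding from a nonempty buffer resets the AoI to `1`, so its action value does
not depend on `Δ`; from an empty buffer, commanding and idling have the same value. Idling, on the
other hand, has an action value that is nondecreasing in `Δ` as soon as `v*` is, and `v*` is
nondecreasing in `Δ` (for any `ξ ∈ [0, 1]`): an increase of the AoI raises the immediate cost and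
moves every successor state to a larger AoI, so the largest decrease of `v*` along an increase of
the AoI reappears at the successor states damped by `γ < 1`, hence is zero. -/

theorem Finset.forall_nonpos_of_bound_contracts {ι : Type*} {s : Finset ι} {f : ι → ℝ} {γ : ℝ}
    (hγ : γ < 1) (h : ∀ M, 0 ≤ M → (∀ j ∈ s, f j ≤ M) → ∀ i ∈ s, f i ≤ γ * M) :
    ∀ i ∈ s, f i ≤ 0 := by
  intro i hi
  set M := max (s.sup' ⟨i, hi⟩ f) 0
  have hbound : ∀ j ∈ s, f j ≤ M := fun j hj => le_max_of_le_left (s.le_sup' f hj)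
  have hsup : s.sup' ⟨i, hi⟩ f ≤ γ * M := s.sup'_le _ _ (h M (le_max_right _ _) hbound)
  have hM : M ≤ 0 := by
    by_contra! hM
    have : max (γ * M) 0 < M := max_lt (by nlinarith) hM
    exact this.not_ge (max_le_max_right 0 hsup)
  exact (hbound i hi).trans hM

section Qsens

variable {B Δmax : ℕ} {lam xi β γ : ℝ} {v : ℕ × ℕ → ℝ} {b Δ : ℕ}

theorem Qsens_one_zero_eq_Qsens_zero (hB : 0 < B) :
    Qsens B Δmax lam xi β γ v 0 Δ 1 = Qsens B Δmax lam xi β γ v 0 Δ 0 := by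
  simp [Qsens, hB]

theorem Qsens_one_of_ne_zero (hb : b ≠ 0) :
    Qsens B Δmax lam 1 β γ v b Δ 1 =
      lam * (β + γ * v (b, 1)) + (1 - lam) * (β + γ * v (b - 1, 1)) := by
  simp [Qsens, hb]

theorem Qsens_sub_Qsens_le {Δ' : ℕ} {M : ℝ} (a : ℕ) (hB : 1 ≤ B) (hb : b ≤ B)
    (hlam : 0 ≤ lam ∧ lam ≤ 1) (hxi : 0 ≤ xi ∧ xi ≤ 1) (hβ : 0 ≤ β) (hγ : 0 ≤ γ) (hM : 0 ≤ M)
    (hΔ : Δ ≤ Δ')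
    (hv : ∀ c ≤ B, v (c, min (Δ + 1) Δmax) - v (c, min (Δ' + 1) Δmax) ≤ M) :
    Qsens B Δmax lam xi β γ v b Δ a - Qsens B Δmax lam xi β γ v b Δ' a ≤ γ * M := by
  obtain ⟨hlam0, hlam1⟩ := hlam
  obtain ⟨hxi0, hxi1⟩ := hxi
  have hm : ((min (Δ + 1) Δmax : ℕ) : ℝ) ≤ (min (Δ' + 1) Δmax : ℕ) := by gcongr
  have hstep : ∀ c ≤ B, β * ((min (Δ + 1) Δmax : ℕ) : ℝ) + γ * v (c, min (Δ + 1) Δmax)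
      - (β * (min (Δ' + 1) Δmax : ℕ) + γ * v (c, min (Δ' + 1) Δmax)) ≤ γ * M := fun c hc => by
    nlinarith [hv c hc]
  have hγM : 0 ≤ γ * M := mul_nonneg hγ hM
  unfold Qsens
  split_ifs with ha hbB hb0
  · nlinarith [hstep (b + 1) hbB, hstep b hb]
  · nlinarith [hstep B le_rfl]
  · nlinarith [hstep 1 hB, hstep 0 (Nat.zero_le B)]
  · nlinarith [hstep b hb, hstep (b - 1) (by omega), mul_nonneg hlam0 (sub_nonneg.2 hxi1),
      mul_nonneg (sub_nonneg.2 hlam1) (sub_nonneg.2 hxi1)]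

end Qsens

theorem bellman_fixed_le_of_aoi_le {B Δmax : ℕ} (hB : 1 ≤ B) {lam xi β γ : ℝ}
    (hlam : 0 ≤ lam ∧ lam ≤ 1) (hxi : 0 ≤ xi ∧ xi ≤ 1) (hβ : 0 ≤ β) (hγ : 0 ≤ γ ∧ γ < 1)
    {v : ℕ × ℕ → ℝ}
    (hfix : ∀ b Δ, b ≤ B → 1 ≤ Δ → Δ ≤ Δmax →
      v (b, Δ) = min (Qsens B Δmax lam xi β γ v b Δ 0) (Qsens B Δmax lam xi β γ v b Δ 1))
    {b Δ Δ' : ℕ} (hb : b ≤ B) (hΔ : 1 ≤ Δ) (hΔΔ' : Δ ≤ Δ') (hΔ' : Δ' ≤ Δmax) :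
    v (b, Δ) ≤ v (b, Δ') := by
  let s : Finset (ℕ × ℕ × ℕ) := (Finset.range (B + 1) ×ˢ Finset.Icc 1 Δmax ×ˢ Finset.Icc 1 Δmax)
    |>.filter fun t => t.2.1 ≤ t.2.2
  have mem_s : ∀ {b Δ Δ'}, (b, Δ, Δ') ∈ s ↔ b ≤ B ∧ 1 ≤ Δ ∧ Δ ≤ Δ' ∧ Δ' ≤ Δmax := by
    intro b Δ Δ'
    simp only [s, Finset.mem_filter, Finset.mem_product, Finset.mem_range, Finset.mem_Icc]
    omega
  suffices ∀ t ∈ s, v (t.1, t.2.1) - v (t.1, t.2.2) ≤ 0 by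
    linarith [this (b, Δ, Δ') (mem_s.2 ⟨hb, hΔ, hΔΔ', hΔ'⟩)]
  refine Finset.forall_nonpos_of_bound_contracts hγ.2 fun M hM hbound => ?_
  rintro ⟨b, Δ, Δ'⟩ ht
  obtain ⟨hb, hΔ, hΔΔ', hΔ'⟩ := mem_s.1 ht
  have hv : ∀ c ≤ B, v (c, min (Δ + 1) Δmax) - v (c, min (Δ' + 1) Δmax) ≤ M := fun c hc =>
    hbound (c, _, _) (mem_s.2 ⟨hc, by omega, by omega, min_le_right _ _⟩)
  have hQ (a : ℕ) := Qsens_sub_Qsens_le a hB hb hlam hxi hβ hγ.1 hM hΔΔ' hv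
  rw [hfix b Δ hb hΔ (by omega), hfix b Δ' hb (by omega) hΔ', sub_le_iff_le_add,
    ← min_add_add_left]
  exact min_le_min (by linarith [hQ 0]) (by linarith [hQ 1])

theorem optimal_policy_threshold_in_AoI_general (B Δmax : ℕ) (hB : 1 ≤ B)
    (lam β γ : ℝ)
    (hlam : 0 ≤ lam ∧ lam ≤ 1)
    (hβ : 0 ≤ β) (hγ : 0 ≤ γ ∧ γ < 1)
    (vstar : ℕ × ℕ → ℝ)
    (hfix : ∀ b Δ, b ≤ B → 1 ≤ Δ → Δ ≤ Δmax →
      vstar (b, Δ) = min (Qsens B Δmax lam 1 β γ vstar b Δ 0)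
        (Qsens B Δmax lam 1 β γ vstar b Δ 1)) :
    ∀ b Δ Δ', b ≤ B → 1 ≤ Δ → Δ ≤ Δ' → Δ' ≤ Δmax →
      Qsens B Δmax lam 1 β γ vstar b Δ 1 ≤ Qsens B Δmax lam 1 β γ vstar b Δ 0 →
      Qsens B Δmax lam 1 β γ vstar b Δ' 1
        ≤ Qsens B Δmax lam 1 β γ vstar b Δ' 0 := by
  intro b Δ Δ' hb hΔ hΔΔ' hΔ' hcommand
  rcases eq_or_ne b 0 with rfl | hb0
  · exact (Qsens_one_zero_eq_Qsens_zero hB).le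
  have hmono : ∀ c ≤ B, vstar (c, min (Δ + 1) Δmax) - vstar (c, min (Δ' + 1) Δmax) ≤ 0 :=
    fun c hc => sub_nonpos.2 <| bellman_fixed_le_of_aoi_le hB hlam ⟨zero_le_one, le_rfl⟩ hβ hγ hfix
      hc (by omega) (by omega) (min_le_right _ _)
  have hidle := Qsens_sub_Qsens_le 0 hB hb hlam ⟨zero_le_one, le_rfl⟩ hβ hγ.1 le_rfl hΔΔ' hmono
  rw [Qsens_one_of_ne_zero hb0] at hcommand ⊢
  linarith

/-- With an error-free channel (ξ = 1), an optimal policy is threshold-based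
in the AoI: if commanding is optimal at (b, Δ), it is optimal at (b, Δ̄) for
any Δ̄ ≥ Δ. -/
theorem optimal_policy_threshold_in_AoI (B Δmax : ℕ) (hB : 1 ≤ B)
    (hΔmax : 1 ≤ Δmax)
    (lam β γ : ℝ)
    (hlam : 0 ≤ lam ∧ lam ≤ 1)
    (hβ : 0 ≤ β) (hγ : 0 ≤ γ ∧ γ < 1)
    (vstar : ℕ × ℕ → ℝ)
    (hfix : ∀ b Δ, b ≤ B → 1 ≤ Δ → Δ ≤ Δmax →
      vstar (b, Δ) = min (Qsens B Δmax lam 1 β γ vstar b Δ 0)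
        (Qsens B Δmax lam 1 β γ vstar b Δ 1)) :
    ∀ b Δ Δ', b ≤ B → 1 ≤ Δ → Δ ≤ Δ' → Δ' ≤ Δmax →
      Qsens B Δmax lam 1 β γ vstar b Δ 1 ≤ Qsens B Δmax lam 1 β γ vstar b Δ 0 →
      Qsens B Δmax lam 1 β γ vstar b Δ' 1
        ≤ Qsens B Δmax lam 1 β γ vstar b Δ' 0 :=
  optimal_policy_threshold_in_AoI_general B Δmax hB lam β γ hlam hβ hγ vstar hfix
end
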